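/- There is an absolute constant c > 0 such that the following holds. Let d+ > d− > 0 satisfy d+ − d− ≥ c√(d+ ln d+) with d+ bounded below by a sufficiently large absolute constant, let G be a locally finite graph with σ : V(G) → {±1}, let C be the core, and let v be a vertex such that G_v is a finite tree. Let σ*_{↑v} : C_v → {±1} be any optimal extension of σ_{↑v}, i.e. one with Σ_{{u,w}∈E(G_v)} (1 − σ*_{↑v}(u)σ*_{↑v}(w))/2 = cut(G_v, σ_{↑v}). Then Σ_{w∈∂v} (1 − σ*_{↑v}(v)σ*_{↑v}(w))/2 = Σ_{w∈∂v} 1{μ*_{w→v} = −ψ̃(μ*_v)}. -/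

import Mathlib

open Filter Topology

attribute [local instance] Classical.propDecidable

set_option linter.unusedVariables false

noncomputable section


/-! ### Basic functions -/

/-- The clamping function `ψ` restricted to the integers. -/
def psiZ (x : ℤ) : ℤ := max (-1) (min 1 x)

/-- The threshold function `ψ̃` restricted to the integers. -/
def tpsiZ (x : ℤ) : ℤ := if x ≤ -1 then -1 else 1

/-- `p : ℤ → ℝ` represents a probability measure on `{-1, 0, 1}`. -/
def IsProbOn3 (p : ℤ → ℝ) : Prop :=
  (∀ z, 0 ≤ p z) ∧ (∀ z : ℤ, z ∉ ({-1, 0, 1} : Set ℤ) → p z = 0) ∧ p (-1) + p 0 + p 1 = 1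

/-- `p` is skewed: `p(1) ≥ 1 - d₊⁻¹⁰`. -/
def Skewed (dp : ℝ) (p : ℤ → ℝ) : Prop := 1 - (dp ^ 10)⁻¹ ≤ p 1

/-- The point mass at `1`, i.e. `(0,0,1)`. -/
def delta1 : ℤ → ℝ := fun z => if z = 1 then 1 else 0

/-! ### The operator `T` -/

/-- Convolution of two mass functions on `ℤ`. -/
def convZ (a b : ℤ → ℝ) : ℤ → ℝ := fun z => ∑' w : ℤ, a w * b (z - w)

/-- `n`-fold convolution power (distribution of a sum of `n` i.i.d. copies). -/
def convPow (a : ℤ → ℝ) : ℕ → ℤ → ℝ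
  | 0 => fun z => if z = 0 then 1 else 0
  | n + 1 => convZ (convPow a n) a

/-- Poisson mass function with mean `d`. -/
def poisP (d : ℝ) (k : ℕ) : ℝ := Real.exp (-d) * d ^ k / (Nat.factorial k)

/-- Distribution of `-η` when `η` has distribution `a`. -/
def flipM (a : ℤ → ℝ) : ℤ → ℝ := fun z => a (-z)

/-- The distribution of `Z_p = ∑_{i=1}^{γ₊} η_i - ∑_{i=γ₊+1}^{γ₊+γ₋} η_i` where the `η_i`
are i.i.d. with distribution `p` and `γ₊ ~ Po(d₊)`, `γ₋ ~ Po(d₋)` are independent. -/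
def Zdist (dp dm : ℝ) (p : ℤ → ℝ) : ℤ → ℝ := fun z =>
  ∑' k : ℕ, ∑' l : ℕ, poisP dp k * poisP dm l * convZ (convPow p k) (convPow (flipM p) l) z

/-- The operator `𝒯 = 𝒯_{d₊,d₋}`: the distribution of `ψ(Z_p)`. -/
def Twp (dp dm : ℝ) (p : ℤ → ℝ) : ℤ → ℝ := fun z =>
  if z = 1 then ∑' m : ℕ, Zdist dp dm p (1 + (m : ℤ))
  else if z = 0 then Zdist dp dm p 0
  else if z = -1 then ∑' m : ℕ, Zdist dp dm p (-1 - (m : ℤ))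
  else 0

/-- The value `Z` as a function of the outcomes `η : Fin (k+l) → ℤ`, where the first `k`
coordinates form the `γ₊`-group and the remaining `l` the `γ₋`-group. -/
def zsum (k l : ℕ) (η : Fin (k + l) → ℤ) : ℤ :=
  (∑ j ∈ Finset.univ.filter (fun j : Fin (k + l) => (j : ℕ) < k), η j)
    - ∑ j ∈ Finset.univ.filter (fun j : Fin (k + l) => k ≤ (j : ℕ)), η j

/-- Conditional expectation of
`∑_{i=1}^{γ₊} 1{η_i = -ψ̃(Z)} + ∑_{i=γ₊+1}^{γ₊+γ₋} 1{η_i = ψ̃(Z)}` given `γ₊ = k, γ₋ = l`. -/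
def innerPhi (p : ℤ → ℝ) (k l : ℕ) : ℝ :=
  ∑ η ∈ Fintype.piFinset (fun _ : Fin (k + l) => ({-1, 0, 1} : Finset ℤ)),
    (∏ i, p (η i)) *
      (((Finset.univ.filter (fun i : Fin (k + l) =>
            (i : ℕ) < k ∧ η i = - tpsiZ (zsum k l η))).card : ℝ)
        + ((Finset.univ.filter (fun i : Fin (k + l) =>
            k ≤ (i : ℕ) ∧ η i = tpsiZ (zsum k l η))).card : ℝ))

/-- The functional `φ_{d₊,d₋}`. -/
def phiOp (dp dm : ℝ) (p : ℤ → ℝ) : ℝ :=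
  (1 / 2) * ∑' k : ℕ, ∑' l : ℕ, poisP dp k * poisP dm l * innerPhi p k l

/-! ### The L¹-Wasserstein distance on measures on `{-1,0,1}` -/

/-- `ℓ₁(p,q)`: infimum of `E |X - Y|` over couplings of `p` and `q`. -/
def ell1 (p q : ℤ → ℝ) : ℝ :=
  sInf { r | ∃ ν : ℤ × ℤ → ℝ, (∀ x y, 0 ≤ ν (x, y)) ∧
    (∀ x, ∑ y ∈ ({-1, 0, 1} : Finset ℤ), ν (x, y) = p x) ∧
    (∀ y, ∑ x ∈ ({-1, 0, 1} : Finset ℤ), ν (x, y) = q y) ∧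
    r = ∑ x ∈ ({-1, 0, 1} : Finset ℤ), ∑ y ∈ ({-1, 0, 1} : Finset ℤ),
          |(x : ℝ) - (y : ℝ)| * ν (x, y) }





/-! ### Graphs: restriction, cuts, the core, Warning Propagation -/

/-- Every neighbourhood in a graph on a finite vertex type is finite. -/
noncomputable instance fintypeNeighborSet {V : Type*} [Fintype V] (G : SimpleGraph V) (v : V) :
    Fintype (G.neighborSet v) := Fintype.ofFinite _

/-- The subgraph of `G` consisting of the edges inside `S` (the induced subgraph on `S`,
viewed as a graph on the ambient vertex set; vertices outside `S` are isolated). -/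
def restrictG {V : Type*} (G : SimpleGraph V) (S : Set V) : SimpleGraph V where
  Adj x y := G.Adj x y ∧ x ∈ S ∧ y ∈ S
  symm := ⟨fun x y h => ⟨G.adj_symm h.1, h.2.2, h.2.1⟩⟩
  loopless := ⟨fun x h => G.irrefl h.1⟩

/-- `cut(G, σ)` for the boundary condition `σ` on `U`: the least number of edges of `G` joining
vertices of different colours, over all `±1`-colourings `τ` agreeing with `σ` on `U`.
(The set of ordered pairs of adjacent bichromatic vertices has twice the size of the
corresponding edge set.) -/
def cutW {V : Type*} (G : SimpleGraph V) (U : Set V) (σ : V → ℤ) : ℕ :=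
  sInf { k | ∃ τ : V → ℤ, (∀ x, τ x = 1 ∨ τ x = -1) ∧ (∀ x ∈ U, τ x = σ x) ∧
    2 * k = {p : V × V | G.Adj p.1 p.2 ∧ τ p.1 ≠ τ p.2}.ncard }

/-- The defining property of the core. -/
def CoreProp {V : Type*} (G : SimpleGraph V) (σ : V → ℤ) (dp dm c : ℝ) (U : Set V) : Prop :=
  ∀ u ∈ U,
    |(({w | G.Adj u w ∧ σ u * σ w = 1}.ncard : ℝ) - dp)| ≤ c / 4 * Real.sqrt (dp * Real.log dp) ∧
    |(({w | G.Adj u w ∧ σ u * σ w = -1}.ncard : ℝ) - dm)| ≤ c / 4 * Real.sqrt (dp * Real.log dp) ∧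
    ({w | G.Adj u w} \ U).ncard ≤ 100

/-- The core: the largest subset satisfying `CoreProp`, i.e. the union of all such subsets. -/
def coreSet {V : Type*} (G : SimpleGraph V) (σ : V → ℤ) (dp dm c : ℝ) : Set V :=
  ⋃₀ { U | CoreProp G σ dp dm c U }

/-- The sets `C_v^{(t)}`. -/
def CvStage {V : Type*} (G : SimpleGraph V) (K : Set V) (v : V) : ℕ → Set V
  | 0 => {v} ∪ {w | G.Adj v w}
  | t + 1 => CvStage G K v t ∪ ⋃ u ∈ (CvStage G K v t \ K), {w | G.Adj u w}

/-- The set `C_v = ⋃_t C_v^{(t)}`. -/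
def CvSet {V : Type*} (G : SimpleGraph V) (K : Set V) (v : V) : Set V :=
  ⋃ t, CvStage G K v t

/-- Warning Propagation messages `μ_{v→w}(t | G, σ)` with initial condition `σ` on `U`. -/
def wpMsg {V : Type*} (G : SimpleGraph V) [∀ v : V, Fintype (G.neighborSet v)]
    (U : Set V) (σ : V → ℤ) : ℕ → V → V → ℤ
  | 0, v, _ => if v ∈ U then σ v else 0
  | t + 1, v, w => psiZ (∑ u ∈ (G.neighborFinset v).erase w, wpMsg G U σ t u v)

/-- `μ_v(t|G,σ) = ∑_{w ∈ ∂v} μ_{w→v}(t|G,σ)`. -/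
def wpVal {V : Type*} (G : SimpleGraph V) [∀ v : V, Fintype (G.neighborSet v)]
    (U : Set V) (σ : V → ℤ) (t : ℕ) (v : V) : ℤ :=
  ∑ w ∈ G.neighborFinset v, wpMsg G U σ t w v

/-- The maximum distance from `w` to any vertex reachable from `w` in `G`. -/
def hgt {V : Type*} (G : SimpleGraph V) (w : V) : ℕ :=
  sSup ((G.dist w) '' { u | G.Reachable w u })

/-- `G_v`: the subgraph of `G` induced on `C_v` (ambient form). -/
def GvG {V : Type*} (G : SimpleGraph V) (K : Set V) (v : V) : SimpleGraph V :=
  restrictG G (CvSet G K v)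

/-- `w_{↑v}`: the neighbour of `w` on the path from `w` to `v` in `G_v`. -/
def parentOf {V : Type*} (G : SimpleGraph V) (K : Set V) (v w : V) : V :=
  @Classical.epsilon V ⟨v⟩ fun x =>
    (GvG G K v).Adj w x ∧ (GvG G K v).dist x v + 1 = (GvG G K v).dist w v

/-- `G_v` with the edge `{w, w_{↑v}}` removed. -/
def GdelG {V : Type*} (G : SimpleGraph V) (K : Set V) (v w : V) : SimpleGraph V :=
  (GvG G K v).deleteEdges {s(w, parentOf G K v w)}

/-- `h_{w→v}`: the maximum distance between `w` and any other vertex of `G_{w→v}`. -/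
def hdir {V : Type*} (G : SimpleGraph V) (K : Set V) (v w : V) : ℕ :=
  hgt (GdelG G K v w) w

/-- `C_{w→v}`: the vertex set of the component of `w` in `G_v` minus the edge `{w, w_{↑v}}`. -/
def Cdir {V : Type*} (G : SimpleGraph V) (K : Set V) (v w : V) : Set V :=
  { u | (GdelG G K v w).Reachable w u }

/-- `G_{w→v}`: the component of `w` in `G_v` minus the edge `{w, w_{↑v}}`. -/
def Gdir {V : Type*} (G : SimpleGraph V) (K : Set V) (v w : V) : SimpleGraph V :=
  restrictG (GdelG G K v w) (Cdir G K v w)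

/-- `h_v`: the maximum distance between `v` and any other vertex of `G_v`. -/
def hvG {V : Type*} (G : SimpleGraph V) (K : Set V) (v : V) : ℕ :=
  hgt (GvG G K v) v

/-- `μ*_{w→v} = μ_{w→w_{↑v}}(h_{w→v}+1 | G, σ)`. -/
def muStarDir {V : Type*} (G : SimpleGraph V) [∀ v : V, Fintype (G.neighborSet v)]
    (K : Set V) (σ : V → ℤ) (v w : V) : ℤ :=
  wpMsg G Set.univ σ (hdir G K v w + 1) w (parentOf G K v w)

/-- `μ*_v = μ_v(h_v+1 | G, σ)`. -/
def muStarV {V : Type*} (G : SimpleGraph V) [∀ v : V, Fintype (G.neighborSet v)]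
    (K : Set V) (σ : V → ℤ) (v : V) : ℤ :=
  wpVal G Set.univ σ (hvG G K v + 1) v

/-- The ball of radius `t` around `v` in `G`. -/
def ballSet {V : Type*} (G : SimpleGraph V) (v : V) (t : ℕ) : Set V :=
  { u | G.Reachable v u ∧ G.dist v u ≤ t }

lemma mem_ballSet_self {V : Type*} (G : SimpleGraph V) (v : V) (t : ℕ) : v ∈ ballSet G v t :=
  ⟨SimpleGraph.Reachable.refl v, by simp [SimpleGraph.dist_self]⟩

/-- `∂^t(G,r,σ) ≅ ∂^t(H,r',τ)`: a root- and label-preserving isomorphism between the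
balls of radius `t`. -/
def RootedBallIso {V W : Type*} (G : SimpleGraph V) (σ : V → ℤ) (r : V)
    (H : SimpleGraph W) (τ : W → ℤ) (r' : W) (t : ℕ) : Prop :=
  ∃ φ : (G.induce (ballSet G r t)) ≃g (H.induce (ballSet H r' t)),
    φ ⟨r, mem_ballSet_self G r t⟩ = ⟨r', mem_ballSet_self H r' t⟩ ∧
    ∀ x, τ (φ x).1 = σ x.1





/-! ### The planted bisection model -/

/-- `σ` is a balanced bipartition: the two class sizes differ by at most one. -/
def BalancedPart {n : ℕ} (σ : Fin n → Bool) : Prop :=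
  (((Finset.univ.filter (fun v => σ v = true)).card : ℤ)
    - ((Finset.univ.filter (fun v => σ v = false)).card : ℤ)).natAbs ≤ 1

/-- The number of balanced bipartitions of `Fin n`. -/
def Nbal (n : ℕ) : ℕ := (Finset.univ.filter (fun σ : Fin n → Bool => BalancedPart σ)).card

/-- The probability `p_{σ(v)σ(w)}` of the edge `{v,w}`, where `p₊ = 2d₊/n`, `p₋ = 2d₋/n`. -/
def pairProb (dp dm : ℝ) (n : ℕ) (σ : Fin n → Bool) (v w : Fin n) : ℝ :=
  if σ v = σ w then 2 * dp / n else 2 * dm / n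

/-- The probability mass of an outcome `ω = (σ, g)` of the planted bisection model
`G(n, 2d₊/n, 2d₋/n)`: `σ` is a uniformly random balanced bipartition and, independently
for each pair `v ≠ w`, the edge `{v,w}` is present with probability `p_{σ(v)σ(w)}`. -/
def pbMass (dp dm : ℝ) (n : ℕ) (ω : (Fin n → Bool) × (Fin n → Fin n → Bool)) : ℝ :=
  (if BalancedPart ω.1 ∧ (∀ v w, ω.2 v w = ω.2 w v) ∧ (∀ v, ω.2 v v = false)
    then ((Nbal n : ℝ))⁻¹ else 0) *
  ∏ p ∈ Finset.univ.filter (fun p : Fin n × Fin n => p.1 < p.2),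
    (if ω.2 p.1 p.2 = true then pairProb dp dm n ω.1 p.1 p.2
      else 1 - pairProb dp dm n ω.1 p.1 p.2)

/-- The probability of an event in the planted bisection model. -/
def pbPr (dp dm : ℝ) (n : ℕ) (A : (Fin n → Bool) × (Fin n → Fin n → Bool) → Prop) : ℝ :=
  ∑ ω ∈ Finset.univ.filter A, pbMass dp dm n ω

/-- Sign of a Boolean, as `±1`. -/
def sgnB (b : Bool) : ℤ := if b then 1 else -1

/-- The planted assignment `σ : [n] → {±1}` of an outcome. -/
def pbSigma {n : ℕ} (ω : (Fin n → Bool) × (Fin n → Fin n → Bool)) : Fin n → ℤ :=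
  fun v => sgnB (ω.1 v)

/-- The graph of an outcome. -/
def pbGraph (n : ℕ) (g : Fin n → Fin n → Bool) : SimpleGraph (Fin n) :=
  SimpleGraph.fromRel fun v w => g v w = true

/-- The minimum bisection width `bis(G)`: the least number of edges joining `S` and its
complement over all `S` with `||S| - |S̄|| ≤ 1`. -/
def bisWidth {n : ℕ} (G : SimpleGraph (Fin n)) : ℕ :=
  sInf { k | ∃ S : Finset (Fin n),
    ((S.card : ℤ) - ((n : ℤ) - (S.card : ℤ))).natAbs ≤ 1 ∧
    k = {p : Fin n × Fin n | G.Adj p.1 p.2 ∧ p.1 ∈ S ∧ p.2 ∉ S}.ncard }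

/-! ### Finite rooted typed trees and the two-type Galton–Watson tree -/

/-- Finite rooted trees whose vertices carry a type in `ℤ` (used with types `±1`). -/
inductive GWT : Type
  | node : ℤ → List GWT → GWT

instance : Inhabited GWT := ⟨.node 0 []⟩

/-- The type of the root. -/
def GWT.typeOf : GWT → ℤ
  | .node s _ => s

/-- The subtrees pending on the children of the root. -/
def GWT.childrenOf : GWT → List GWT
  | .node _ l => l

/-- Valid positions (vertices) of a tree, encoded as lists of child indices. -/
def GWT.valid : GWT → List ℕ → Prop
  | _, [] => True
  | T, i :: p => i < T.childrenOf.length ∧ GWT.valid (T.childrenOf.getD i default) p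

/-- The type of the vertex at position `q`. -/
def GWT.typeAt : GWT → List ℕ → ℤ
  | T, [] => T.typeOf
  | T, i :: p => GWT.typeAt (T.childrenOf.getD i default) p

/-- The tree as a simple graph on its set of positions. -/
def GWT.graph (T : GWT) : SimpleGraph { p : List ℕ // T.valid p } where
  Adj a b := (∃ i : ℕ, (b : List ℕ) = (a : List ℕ) ++ [i]) ∨
             (∃ i : ℕ, (a : List ℕ) = (b : List ℕ) ++ [i])
  symm := ⟨fun a b h => h.symm⟩
  loopless := ⟨fun a h => by
    rcases h with ⟨i, hi⟩ | ⟨i, hi⟩ <;>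
      · have := congrArg List.length hi
        simp at this⟩

/-- The root of the tree. -/
def GWT.root (T : GWT) : { p : List ℕ // T.valid p } := ⟨[], trivial⟩

/-- The type labelling of the vertices. -/
def GWT.lab (T : GWT) : { p : List ℕ // T.valid p } → ℤ := fun q => T.typeAt q.1

/-- The Warning Propagation message `μ_{r↑}(t)` sent by the root of a tree towards its
(imaginary) parent, when the messages are initialised with the types. -/
def GWT.rootMsg : ℕ → GWT → ℤ
  | 0, T => T.typeOf
  | t + 1, T => psiZ ((T.childrenOf.map (GWT.rootMsg t)).sum)

/-- The probability mass function of the depth-`t` truncation of the two-type Galton–Watson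
tree with root type `s`, realised as a random *ordered* tree: the root spawns `Po(d₊ + d₋)`
children, each independently of type `s` with probability `d₊/(d₊+d₋)` and of type `-s`
with probability `d₋/(d₊+d₋)`, and the subtrees pending on the children are independent
Galton–Watson trees truncated at depth `t-1`. -/
def ogwMass (dp dm : ℝ) : ℕ → ℤ → GWT → ℝ
  | 0, s, T => if T.typeOf = s ∧ T.childrenOf = [] then 1 else 0
  | t + 1, s, T =>
    if T.typeOf = s then
      Real.exp (-(dp + dm)) / (Nat.factorial T.childrenOf.length) *
        (T.childrenOf.map fun U => (if U.typeOf = s then dp else dm)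
          * ogwMass dp dm t U.typeOf U).prod
    else 0


end

/-!
Core vertices are frozen: each has a clear majority of like-coloured neighbours inside the
core, so Warning Propagation keeps sending its own colour. Hence in the finite tree `G_v`,
rooted at `v`, the message `μ*_{w→v}` of a vertex outside the core is `ψ` of the sum of the
messages of its children. A neighbour `w` of `v` with nonzero message is coloured `μ*_{w→v}` by
`σ_{↑v}`, and `v` is coloured `ψ̃(μ*_v)`, so its summand is the indicator. If `μ*_{w→v} = 0`
but an optimal extension gave `w` the colour opposite to `v`, repaint with the colour of `v`
all vertices reached from `w` by moving away from `v` through vertices with zero message.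
Such a vertex has as many children with message `1` as with `-1`, and the children with
nonzero message keep their forced colours, so the number of bichromatic edges to its children
does not grow; the edge `vw`, however, stops being bichromatic, contradicting optimality.
-/

lemma psiZ_eq_zero_iff {x : ℤ} : psiZ x = 0 ↔ x = 0 := by unfold psiZ; omega

lemma psiZ_of_one_le {x : ℤ} (h : 1 ≤ x) : psiZ x = 1 := by unfold psiZ; omega

lemma psiZ_of_le_neg_one {x : ℤ} (h : x ≤ -1) : psiZ x = -1 := by unfold psiZ; omega

lemma abs_psiZ_le_one (x : ℤ) : |psiZ x| ≤ 1 := by unfold psiZ; rw [abs_le]; omega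

lemma tpsiZ_eq_one_or_neg_one (x : ℤ) : tpsiZ x = 1 ∨ tpsiZ x = -1 := by
  unfold tpsiZ; split <;> simp

namespace SimpleGraph

variable {V : Type*} {T H : SimpleGraph V} {a b r x y z : V}

lemma IsAcyclic.length_eq_dist (hT : T.IsAcyclic) (hH : H ≤ T) {p : H.Walk a b}
    (hp : p.IsPath) : p.length = H.dist a b := by
  obtain ⟨q, hq, hql⟩ := Reachable.exists_path_of_dist ⟨p⟩
  have := (hT.subsingleton_path a b).elim ⟨p.mapLe hH, hp.mapLe hH⟩ ⟨q.mapLe hH, hq.mapLe hH⟩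
  simpa [hql] using congrArg (fun p : T.Path a b => p.1.length) this

lemma IsAcyclic.not_reachable_deleteEdges (hT : T.IsAcyclic) (h : T.Adj a b) :
    ¬ (T.deleteEdges {s(a, b)}).Reachable a b :=
  isBridge_iff.1 (isAcyclic_iff_forall_adj_isBridge.1 hT h)

/-- The neighbour of `x` one step closer to the root `r`; junk when `x = r` or `x` is not
connected to `r`. -/
noncomputable def towardRoot (T : SimpleGraph V) (r x : V) : V :=
  @Classical.epsilon V ⟨r⟩ fun y => T.Adj x y ∧ T.dist y r + 1 = T.dist x r

lemma towardRoot_spec (hx : T.Reachable x r) (hxr : x ≠ r) :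
    T.Adj x (T.towardRoot r x) ∧ T.dist (T.towardRoot r x) r + 1 = T.dist x r := by
  refine Classical.epsilon_spec (p := fun y => T.Adj x y ∧ T.dist y r + 1 = T.dist x r) ?_
  obtain ⟨p, hp⟩ := hx.exists_walk_length_eq_dist
  cases p with
  | nil => exact absurd rfl hxr
  | cons h q =>
    refine ⟨_, h, le_antisymm ?_ ?_⟩
    · have := dist_le q
      simp only [Walk.length_cons] at hp
      omega
    · exact h.reachable.dist_triangle_left r |>.trans (by rw [dist_eq_one_iff_adj.2 h, add_comm])

lemma IsAcyclic.eq_towardRoot (hT : T.IsAcyclic) (hxy : T.Adj x y)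
    (hd : T.dist y r + 1 = T.dist x r) : y = T.towardRoot r x := by
  have hx : T.Reachable x r := Reachable.of_dist_ne_zero (by omega)
  have hxr : x ≠ r := by rintro rfl; simp at hd
  obtain ⟨hxy', hd'⟩ := towardRoot_spec hx hxr
  obtain ⟨p, hp⟩ := (hxy.reachable.symm.trans hx).exists_walk_length_eq_dist
  obtain ⟨p', hp'⟩ := (hxy'.reachable.symm.trans hx).exists_walk_length_eq_dist
  have hpath : ∀ {y} (h : T.Adj x y) (q : T.Walk y r), q.length + 1 = T.dist x r →
      (Walk.cons h q).IsPath := fun h q hq => Walk.isPath_of_length_eq_dist _ (by simpa using hq)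
  have := (hT.subsingleton_path x r).elim ⟨_, hpath hxy p (by omega)⟩ ⟨_, hpath hxy' p' (by omega)⟩
  simpa using congrArg (fun q : T.Path x r => q.1.snd) this

lemma IsAcyclic.eq_towardRoot_or_eq_towardRoot (hT : T.IsAcyclic) (hxy : T.Adj x y)
    (hx : T.Reachable x r) : y = T.towardRoot r x ∨ x = T.towardRoot r y := by
  rcases hT.dist_eq_dist_add_one_of_adj_of_reachable r hxy hx.symm with h | h
  · exact .inl (hT.eq_towardRoot hxy (by rw [dist_comm, ← h, dist_comm]))
  · exact .inr (hT.eq_towardRoot hxy.symm (by rw [dist_comm, ← h, dist_comm]))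

lemma hgt_le {a : V} {n : ℕ} (h : ∀ u, H.Reachable a u → H.dist a u ≤ n) : hgt H a ≤ n :=
  csSup_le ⟨0, a, Reachable.refl a, dist_self⟩ (by rintro _ ⟨u, hu, rfl⟩; exact h u hu)

lemma dist_le_hgt {a u : V} (hfin : {u | H.Reachable a u}.Finite) (hu : H.Reachable a u) :
    H.dist a u ≤ hgt H a :=
  le_csSup (hfin.image _).bddAbove ⟨u, hu, rfl⟩

/-- Prolonging paths of the branch at `y` (cut off from `x`) by the edge `xy` shows that this
branch sits one level below the branch at `x` (cut off from `z ≠ y`). -/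
lemma IsAcyclic.hgt_deleteEdges_add_one_le (hT : T.IsAcyclic) (hxy : T.Adj x y) (hyz : y ≠ z)
    (hfin : {u | (T.deleteEdges {s(x, z)}).Reachable x u}.Finite) :
    hgt (T.deleteEdges {s(y, x)}) y + 1 ≤ hgt (T.deleteEdges {s(x, z)}) x := by
  have key : ∀ u, (T.deleteEdges {s(y, x)}).Reachable y u →
      (T.deleteEdges {s(x, z)}).Reachable x u ∧
        (T.deleteEdges {s(y, x)}).dist y u + 1 = (T.deleteEdges {s(x, z)}).dist x u := by
    intro u hu
    obtain ⟨p, hp, -⟩ := hu.exists_path_of_dist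
    have hxp : x ∉ p.support := fun h => hT.not_reachable_deleteEdges hxy.symm ⟨p.takeUntil x h⟩
    have hedges : ∀ e ∈ p.edges, e ∈ (T.deleteEdges {s(x, z)}).edgeSet := by
      intro e he
      rw [edgeSet_deleteEdges]
      refine ⟨edgeSet_mono (deleteEdges_le _) (p.edges_subset_edgeSet he), ?_⟩
      rintro rfl
      exact hxp (p.fst_mem_support_of_mem_edges he)
    have hxy' : (T.deleteEdges {s(x, z)}).Adj x y := by
      simp [deleteEdges_adj, hxy, hyz, hxy.ne.symm]
    have hq : (Walk.cons hxy' (p.transfer _ hedges)).IsPath := by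
      rw [Walk.cons_isPath_iff, Walk.support_transfer]
      exact ⟨hp.transfer hedges, hxp⟩
    refine ⟨⟨Walk.cons hxy' (p.transfer _ hedges)⟩, ?_⟩
    rw [← hT.length_eq_dist (deleteEdges_le _) hp, ← hT.length_eq_dist (deleteEdges_le _) hq]
    simp
  have hle_hgt := fun u hu => dist_le_hgt hfin (key u hu).1
  have h1 := hle_hgt y (Reachable.refl y)
  rw [← (key y (Reachable.refl y)).2, dist_self] at h1
  have h2 : hgt (T.deleteEdges {s(y, x)}) y ≤ hgt (T.deleteEdges {s(x, z)}) x - 1 :=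
    hgt_le fun u hu => by have := (key u hu).2; have := hle_hgt u hu; omega
  omega

end SimpleGraph

section WarningPropagation

open Finset

variable {V : Type*} (G : SimpleGraph V) [∀ v, Fintype (G.neighborSet v)] {σ : V → ℤ}

lemma abs_wpMsg_le_one (hσ : ∀ x, σ x = 1 ∨ σ x = -1) (t : ℕ) (u x : V) :
    |wpMsg G Set.univ σ t u x| ≤ 1 := by
  cases t with
  | zero => rcases hσ u with h | h <;> simp [wpMsg, h]
  | succ t => exact abs_psiZ_le_one _

lemma wpMsg_eq_of_forall_majority (hσ : ∀ x, σ x = 1 ∨ σ x = -1) {U : Set V}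
    (hU : ∀ u ∈ U, #(G.neighborFinset u) + 3 ≤
      2 * #{y ∈ G.neighborFinset u | y ∈ U ∧ σ y = σ u}) (t : ℕ) :
    ∀ u ∈ U, ∀ x, wpMsg G Set.univ σ t u x = σ u := by
  induction t with
  | zero => intro u _ x; simp [wpMsg]
  | succ t ih =>
    intro u hu x
    set A := {y ∈ G.neighborFinset u | y ∈ U ∧ σ y = σ u}
    set N := (G.neighborFinset u).erase x
    have hterm : ∀ y ∈ N, (if y ∈ A then 1 else -1) ≤ σ u * wpMsg G Set.univ σ t y u := by
      intro y _
      split_ifs with hy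
      · rw [Finset.mem_filter] at hy
        rw [ih y hy.2.1 u, hy.2.2]
        rcases hσ u with h | h <;> simp [h]
      · have := abs_le.1 (abs_wpMsg_le_one G hσ t y u)
        rcases hσ u with h | h <;> rw [h] <;> omega
    have hNA : N.filter (· ∈ A) = A.erase x := by
      ext y; simp only [N, A, mem_filter, mem_erase]; tauto
    have hcount : (1 : ℤ) ≤ ∑ y ∈ N, (if y ∈ A then 1 else -1) := by
      rw [sum_ite, sum_const, sum_const, hNA]
      have h1 := pred_card_le_card_erase (s := A) (a := x)
      have h2 : #(N.filter (· ∉ A)) + #(A.erase x) ≤ #(G.neighborFinset u) := by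
        rw [← hNA, add_comm, card_filter_add_card_filter_not]
        exact card_erase_le
      have h3 : #(G.neighborFinset u) + 3 ≤ 2 * #A := hU u hu
      simp only [nsmul_eq_mul, mul_one, mul_neg]
      omega
    have hsum := hcount.trans (sum_le_sum hterm)
    rw [← mul_sum] at hsum
    show psiZ (∑ y ∈ N, wpMsg G Set.univ σ t y u) = σ u
    rcases hσ u with h | h <;> rw [h] at hsum ⊢
    · exact psiZ_of_one_le (by simpa using hsum)
    · exact psiZ_of_le_neg_one (by linarith)

end WarningPropagation

lemma le_sqrt_mul_log_self {d : ℝ} (hd : 10 ^ 6 ≤ d) : 1000 ≤ Real.sqrt (d * Real.log d) := by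
  have hlog : 1 ≤ Real.log d := by
    rw [Real.le_log_iff_exp_le (by linarith)]
    linarith [Real.exp_one_lt_d9]
  rw [Real.le_sqrt' (by norm_num)]
  nlinarith

section Core

open Finset

variable {V : Type*} (G : SimpleGraph V) [∀ v, Fintype (G.neighborSet v)] {σ : V → ℤ}

lemma card_neighborFinset_add_three_le_of_mem_coreSet (hσ : ∀ x, σ x = 1 ∨ σ x = -1)
    {dp dm : ℝ} (hD : 10 ^ 6 ≤ dp) (hgap : Real.sqrt (dp * Real.log dp) ≤ dp - dm) {u : V}
    (hu : u ∈ coreSet G σ dp dm 1) :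
    #(G.neighborFinset u) + 3 ≤
      2 * #{y ∈ G.neighborFinset u | y ∈ coreSet G σ dp dm 1 ∧ σ y = σ u} := by
  obtain ⟨U, hU, huU⟩ := hu
  obtain ⟨hplus, hminus, hout⟩ := hU u huU
  set P := {y ∈ G.neighborFinset u | σ u * σ y = 1}
  set M := {y ∈ G.neighborFinset u | σ u * σ y = -1}
  have hncard : ∀ e : ℤ, {w | G.Adj u w ∧ σ u * σ w = e}.ncard =
      #{y ∈ G.neighborFinset u | σ u * σ y = e} := fun e => by
    rw [← Set.ncard_coe_finset]; congr 1; ext; simp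
  rw [hncard] at hplus hminus
  have hdeg : #(G.neighborFinset u) = #P + #M := by
    rw [← card_filter_add_card_filter_not (p := fun y => σ u * σ y = 1)]
    congr 2
    ext y
    rcases hσ u with h | h <;> rcases hσ y with h' | h' <;> simp [M, h, h']
  have hPU : #{y ∈ P | y ∉ U} ≤ 100 := by
    refine le_trans ?_ hout
    rw [← Set.ncard_coe_finset]
    exact Set.ncard_le_ncard (fun y hy => by simp_all [P])
      ((G.neighborSet u).toFinite.subset fun _ hy => hy.1)
  have hPin : #{y ∈ P | y ∈ U} ≤
      #{y ∈ G.neighborFinset u | y ∈ coreSet G σ dp dm 1 ∧ σ y = σ u} := by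
    refine card_le_card fun y hy => ?_
    simp only [P, mem_filter] at hy ⊢
    refine ⟨hy.1.1, Set.mem_sUnion_of_mem hy.2 hU, ?_⟩
    rcases hσ u with h | h <;> rcases hσ y with h' | h' <;> simp_all
  have hsplit := card_filter_add_card_filter_not (s := P) (p := (· ∈ U))
  have hs := le_sqrt_mul_log_self hD
  -- `203` is the margin needed for `2 * (#P - 100) ≥ #P + #M + 3`.
  have hmargin : (203 : ℝ) ≤ #P - #M := by
    rw [abs_le] at hplus hminus
    linarith [hplus.1, hminus.2]
  have : (203 : ℤ) ≤ #P - #M := by exact_mod_cast hmargin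
  omega

end Core

section RootedTree

open SimpleGraph

variable {V : Type*} {G : SimpleGraph V} {K : Set V} {v y z : V}

lemma mem_CvSet_self : v ∈ CvSet G K v :=
  Set.mem_iUnion.2 ⟨0, .inl rfl⟩

lemma mem_CvSet_of_adj (h : G.Adj v y) : y ∈ CvSet G K v :=
  Set.mem_iUnion.2 ⟨0, .inr h⟩

lemma mem_CvSet_of_adj_of_notMem (hz : z ∈ CvSet G K v) (hzK : z ∉ K) (h : G.Adj z y) :
    y ∈ CvSet G K v := by
  obtain ⟨t, ht⟩ := Set.mem_iUnion.1 hz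
  exact Set.mem_iUnion.2 ⟨t + 1, .inr (Set.mem_iUnion₂.2 ⟨z, ⟨ht, hzK⟩, h⟩)⟩

lemma mem_CvSet_of_reachable {H : SimpleGraph V} (hH : H ≤ GvG G K v) (hz : z ∈ CvSet G K v)
    (h : H.Reachable z y) : y ∈ CvSet G K v := by
  obtain ⟨p⟩ := h
  cases p.reverse with
  | nil => exact hz
  | cons h _ => exact (hH h).2.1

lemma GvG_le : GvG G K v ≤ G := fun _ _ h => h.1

lemma parentOf_eq_towardRoot : parentOf G K v = (GvG G K v).towardRoot v := rfl

variable (htree : (G.induce (CvSet G K v)).IsTree)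
include htree

lemma GvG_reachable {a b : V} (ha : a ∈ CvSet G K v) (hb : b ∈ CvSet G K v) :
    (GvG G K v).Reachable a b :=
  (htree.connected ⟨a, ha⟩ ⟨b, hb⟩).map
    (⟨Subtype.val, fun {x y} h => ⟨h, x.2, y.2⟩⟩ : G.induce (CvSet G K v) →g GvG G K v)

lemma GvG_isAcyclic : (GvG G K v).IsAcyclic := by
  intro u c hc
  have hu : u ∈ CvSet G K v := by
    cases c with
    | nil => exact absurd hc Walk.not_isCycle_nil
    | cons h _ => exact h.2.1
  have hS : ∀ x ∈ (c.mapLe GvG_le).support, x ∈ CvSet G K v := fun x hx =>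
    mem_CvSet_of_reachable le_rfl hu ⟨c.takeUntil x (by simpa using hx)⟩
  refine htree.isAcyclic ((c.mapLe GvG_le).induce _ hS) ?_
  have hinj : Function.Injective (Embedding.induce (G := G) (CvSet G K v)).toHom :=
    (Embedding.induce (G := G) _).injective
  rw [← Walk.isCycle_map_iff_of_injective hinj, Walk.map_induce]
  exact hc.mapLe _

lemma parentOf_spec (hz : z ∈ CvSet G K v) (hzv : z ≠ v) :
    (GvG G K v).Adj z (parentOf G K v z) ∧
      (GvG G K v).dist (parentOf G K v z) v + 1 = (GvG G K v).dist z v := by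
  rw [parentOf_eq_towardRoot]
  exact towardRoot_spec (GvG_reachable htree hz mem_CvSet_self) hzv

lemma parentOf_of_adj_root (h : G.Adj v y) : parentOf G K v y = v := by
  have hadj : (GvG G K v).Adj y v := ⟨h.symm, mem_CvSet_of_adj h, mem_CvSet_self⟩
  rw [parentOf_eq_towardRoot]
  refine ((GvG_isAcyclic htree).eq_towardRoot hadj ?_).symm
  rw [dist_self, (dist_eq_one_iff_adj).2 hadj]

lemma parentOf_eq_of_adj (h : (GvG G K v).Adj z y) (hy : y ≠ parentOf G K v z) :
    y ≠ v ∧ parentOf G K v y = z := by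
  refine ⟨fun hyv => hy (hyv ▸ (parentOf_of_adj_root htree (hyv ▸ h.1.symm)).symm), ?_⟩
  rw [parentOf_eq_towardRoot] at hy ⊢
  rcases (GvG_isAcyclic htree).eq_towardRoot_or_eq_towardRoot h
    (GvG_reachable htree h.2.1 mem_CvSet_self) with h' | h'
  · exact absurd h' hy
  · exact h'.symm

lemma GvG_adj_cases {a b : V} (h : (GvG G K v).Adj a b) :
    (a ≠ v ∧ b = parentOf G K v a) ∨ (b ≠ v ∧ a = parentOf G K v b) := by
  by_cases ha : a = v
  · subst ha
    exact .inr ⟨h.ne.symm, (parentOf_of_adj_root htree h.1).symm⟩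
  by_cases hb : b = parentOf G K v a
  · exact .inl ⟨ha, hb⟩
  · exact .inr ((parentOf_eq_of_adj htree h hb).imp id Eq.symm)

lemma filter_parentOf_eq (hfin : (CvSet G K v).Finite) (hz : z ∈ CvSet G K v) (hzv : z ≠ v)
    (hzK : z ∉ K) [Fintype (G.neighborSet z)] :
    {y ∈ hfin.toFinset.erase v | parentOf G K v y = z} =
      (G.neighborFinset z).erase (parentOf G K v z) := by
  ext y
  simp only [Finset.mem_filter, Finset.mem_erase, Set.Finite.mem_toFinset, mem_neighborFinset]
  constructor
  · rintro ⟨⟨hyv, hy⟩, rfl⟩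
    have h₁ := parentOf_spec htree hy hyv
    have h₂ := parentOf_spec htree h₁.1.2.2 hzv
    refine ⟨fun h => ?_, h₁.1.1.symm⟩
    rw [← h] at h₂
    omega
  · rintro ⟨hy, hzy⟩
    have hyS := mem_CvSet_of_adj_of_notMem hz hzK hzy
    exact (parentOf_eq_of_adj htree ⟨hzy, hz, hyS⟩ hy).imp (fun hyv => ⟨hyv, hyS⟩) id

lemma hdir_add_one_le (hfin : (CvSet G K v).Finite) (hz : z ∈ CvSet G K v)
    (h : (GvG G K v).Adj z y) (hy : y ≠ parentOf G K v z) :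
    hdir G K v y + 1 ≤ hdir G K v z := by
  unfold hdir GdelG
  rw [(parentOf_eq_of_adj htree h hy).2]
  exact (GvG_isAcyclic htree).hgt_deleteEdges_add_one_le h hy
    (hfin.subset fun u hu => mem_CvSet_of_reachable (deleteEdges_le _) hz hu)

end RootedTree

section Messages

open SimpleGraph

variable {V : Type*} {G : SimpleGraph V} [∀ v, Fintype (G.neighborSet v)] {σ : V → ℤ}
  {K : Set V} {v z : V}

lemma muStarDir_of_mem (hK : ∀ u ∈ K, ∀ t x, wpMsg G Set.univ σ t u x = σ u) (hz : z ∈ K) :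
    muStarDir G K σ v z = σ z :=
  hK z hz _ _

lemma abs_muStarDir_le_one (hσ : ∀ x, σ x = 1 ∨ σ x = -1) (w : V) :
    |muStarDir G K σ v w| ≤ 1 :=
  abs_wpMsg_le_one G hσ _ _ _

variable (htree : (G.induce (CvSet G K v)).IsTree) (hfin : (CvSet G K v).Finite)
include htree hfin

lemma sum_wpMsg_eq_sum_muStarDir (hz : z ∈ CvSet G K v) (hzK : z ∉ K) {s : ℕ}
    (hs : hdir G K v z ≤ s)
    (h : ∀ y ∈ (G.neighborFinset z).erase (parentOf G K v z), ∀ t, hdir G K v y ≤ t →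
      wpMsg G Set.univ σ (t + 1) y (parentOf G K v y) = muStarDir G K σ v y) :
    ∑ y ∈ (G.neighborFinset z).erase (parentOf G K v z), wpMsg G Set.univ σ s y z =
      ∑ y ∈ (G.neighborFinset z).erase (parentOf G K v z), muStarDir G K σ v y := by
  refine Finset.sum_congr rfl fun y hy => ?_
  have hy' := Finset.mem_erase.1 hy
  have hadj : (GvG G K v).Adj z y :=
    ⟨(mem_neighborFinset ..).1 hy'.2, hz,
      mem_CvSet_of_adj_of_notMem hz hzK ((mem_neighborFinset ..).1 hy'.2)⟩
  have hlt := hdir_add_one_le htree hfin hz hadj hy'.1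
  obtain ⟨t, rfl⟩ : ∃ t, s = t + 1 := ⟨s - 1, by omega⟩
  rw [← (parentOf_eq_of_adj htree hadj hy'.1).2]
  exact h y hy t (by omega)

lemma wpMsg_succ_parentOf_eq_muStarDir (hK : ∀ u ∈ K, ∀ t x, wpMsg G Set.univ σ t u x = σ u)
    (hz : z ∈ CvSet G K v) {t : ℕ} (ht : hdir G K v z ≤ t) :
    wpMsg G Set.univ σ (t + 1) z (parentOf G K v z) = muStarDir G K σ v z := by
  induction hn : hdir G K v z using Nat.strong_induction_on generalizing z t with
  | _ n ih =>
    by_cases hzK : z ∈ K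
    · rw [hK z hzK, muStarDir_of_mem hK hzK]
    have hchildren : ∀ y ∈ (G.neighborFinset z).erase (parentOf G K v z), ∀ t,
        hdir G K v y ≤ t →
          wpMsg G Set.univ σ (t + 1) y (parentOf G K v y) = muStarDir G K σ v y := by
      intro y hy t ht
      have hy' := Finset.mem_erase.1 hy
      have hyS := mem_CvSet_of_adj_of_notMem hz hzK ((mem_neighborFinset ..).1 hy'.2)
      have := hdir_add_one_le htree hfin hz ⟨(mem_neighborFinset ..).1 hy'.2, hz, hyS⟩ hy'.1
      exact ih _ (by omega) hyS ht rfl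
    show psiZ _ = psiZ _
    rw [sum_wpMsg_eq_sum_muStarDir htree hfin hz hzK ht hchildren,
      sum_wpMsg_eq_sum_muStarDir htree hfin hz hzK le_rfl hchildren]

lemma muStarDir_eq_psiZ_sum (hK : ∀ u ∈ K, ∀ t x, wpMsg G Set.univ σ t u x = σ u)
    (hz : z ∈ CvSet G K v) (hzK : z ∉ K) :
    muStarDir G K σ v z =
      psiZ (∑ y ∈ (G.neighborFinset z).erase (parentOf G K v z), muStarDir G K σ v y) := by
  show psiZ _ = _
  rw [sum_wpMsg_eq_sum_muStarDir htree hfin hz hzK le_rfl fun y hy t ht =>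
    wpMsg_succ_parentOf_eq_muStarDir htree hfin hK (mem_CvSet_of_adj_of_notMem hz hzK
      ((mem_neighborFinset ..).1 (Finset.mem_of_mem_erase hy))) ht]

end Messages

open Finset in
lemma Finset.card_filter_eq_of_sum_eq_zero {ι : Type*} {s : Finset ι} {f : ι → ℤ}
    (hf : ∀ i ∈ s, |f i| ≤ 1) (hsum : ∑ i ∈ s, f i = 0) {a b : ℤ} (ha : a = 1 ∨ a = -1)
    (hb : b = 1 ∨ b = -1) : #{i ∈ s | f i = a} = #{i ∈ s | f i = b} := by
  have hsplit : ∀ i ∈ s, f i = (if f i = 1 then 1 else 0) - (if f i = -1 then 1 else 0) := by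
    intro i hi
    have := abs_le.1 (hf i hi)
    split_ifs <;> omega
  rw [Finset.sum_congr rfl hsplit, Finset.sum_sub_distrib, Finset.sum_boole, Finset.sum_boole,
    sub_eq_zero] at hsum
  have hbal : #{i ∈ s | f i = 1} = #{i ∈ s | f i = -1} := by exact_mod_cast hsum
  rcases ha with rfl | rfl <;> rcases hb with rfl | rfl <;> simp [hbal]

section Cut

open SimpleGraph Finset

variable {V : Type*} {G : SimpleGraph V} {K : Set V} {v : V}

/-- The number of edges of the tree `G_v` that are bichromatic under `τ`, each edge being
counted at its endpoint farther from `v`. -/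
noncomputable def cutCount (hfin : (CvSet G K v).Finite) (τ : V → ℤ) : ℕ :=
  #{y ∈ hfin.toFinset.erase v | τ y ≠ τ (parentOf G K v y)}

noncomputable def childCutCount (hfin : (CvSet G K v).Finite) (τ : V → ℤ) (z : V) : ℕ :=
  #{y ∈ hfin.toFinset.erase v | parentOf G K v y = z ∧ τ y ≠ τ z}

variable (htree : (G.induce (CvSet G K v)).IsTree) (hfin : (CvSet G K v).Finite)
include htree

lemma ncard_bichromatic_eq_two_mul_cutCount (τ : V → ℤ) :
    {p : V × V | (GvG G K v).Adj p.1 p.2 ∧ τ p.1 ≠ τ p.2}.ncard = 2 * cutCount hfin τ := by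
  set F := {y ∈ hfin.toFinset.erase v | τ y ≠ τ (parentOf G K v y)}
  have hset : {p : V × V | (GvG G K v).Adj p.1 p.2 ∧ τ p.1 ≠ τ p.2} =
      ↑(F.image (fun y => (y, parentOf G K v y)) ∪ F.image (fun y => (parentOf G K v y, y))) := by
    ext ⟨a, b⟩
    simp only [F, Set.mem_ofPred_eq, coe_union, coe_image, Set.mem_union, Set.mem_image,
      mem_coe, mem_filter, mem_erase, Set.Finite.mem_toFinset, Prod.mk.injEq]
    constructor
    · rintro ⟨h, hne⟩
      rcases GvG_adj_cases htree h with ⟨hav, rfl⟩ | ⟨hbv, rfl⟩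
      · exact .inl ⟨a, ⟨⟨hav, h.2.1⟩, hne⟩, rfl, rfl⟩
      · exact .inr ⟨b, ⟨⟨hbv, h.2.2⟩, hne.symm⟩, rfl, rfl⟩
    · rintro (⟨y, ⟨⟨hyv, hy⟩, hne⟩, rfl, rfl⟩ | ⟨y, ⟨⟨hyv, hy⟩, hne⟩, rfl, rfl⟩)
      · exact ⟨(parentOf_spec htree hy hyv).1, hne⟩
      · exact ⟨(parentOf_spec htree hy hyv).1.symm, hne.symm⟩
  have hdisj : Disjoint (F.image (fun y => (y, parentOf G K v y)))
      (F.image (fun y => (parentOf G K v y, y))) := by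
    rw [Finset.disjoint_left]
    rintro _ hp hq
    simp only [F, mem_image, mem_filter, mem_erase, Set.Finite.mem_toFinset] at hp hq
    obtain ⟨y, ⟨⟨hyv, hy⟩, -⟩, rfl⟩ := hp
    obtain ⟨y', ⟨⟨hyv', hy'⟩, -⟩, h⟩ := hq
    obtain ⟨h₁, h₂⟩ := Prod.mk.inj h
    have d₁ := (parentOf_spec htree hy hyv).2
    have d₂ := (parentOf_spec htree hy' hyv').2
    rw [h₁] at d₂
    rw [← h₂] at d₁
    omega
  rw [hset, Set.ncard_coe_finset, card_union_of_disjoint hdisj,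
    card_image_of_injective _ fun _ _ h => (Prod.mk.inj h).1,
    card_image_of_injective _ fun _ _ h => (Prod.mk.inj h).2, two_mul]
  rfl

lemma cutCount_eq_sum_childCutCount (τ : V → ℤ) :
    cutCount hfin τ = ∑ z ∈ hfin.toFinset, childCutCount hfin τ z := by
  have hmaps : ∀ y ∈ {y ∈ hfin.toFinset.erase v | τ y ≠ τ (parentOf G K v y)},
      parentOf G K v y ∈ hfin.toFinset := fun y hy => by
    simp only [mem_filter, mem_erase, Set.Finite.mem_toFinset] at hy ⊢
    exact (parentOf_spec htree hy.1.2 hy.1.1).1.2.2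
  rw [cutCount, card_eq_sum_card_fiberwise hmaps]
  refine sum_congr rfl fun z _ => ?_
  rw [childCutCount, filter_filter]
  congr 1
  exact filter_congr fun y _ => ⟨fun ⟨h, hz⟩ => ⟨hz, hz ▸ h⟩, fun ⟨hz, h⟩ => ⟨hz ▸ h, hz⟩⟩

end Cut

section Exchange

open SimpleGraph Finset

variable {V : Type*} {G : SimpleGraph V} [∀ v, Fintype (G.neighborSet v)] {σ : V → ℤ}
  {K : Set V} {v w u y : V}

/-- The vertices of `G_v` joined to `w` by a path going up towards `v` through vertices with
vanishing message `μ*` only. -/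
def zeroBranch (G : SimpleGraph V) [∀ v, Fintype (G.neighborSet v)] (K : Set V) (σ : V → ℤ)
    (v w : V) : Set V :=
  {u | Relation.ReflTransGen (fun a b => a ∈ CvSet G K v ∧ a ≠ v ∧ muStarDir G K σ v a = 0 ∧
    b = parentOf G K v a) u w}

lemma mem_zeroBranch_self : w ∈ zeroBranch G K σ v w := Relation.ReflTransGen.refl

lemma zeroBranch_spec (hw : G.Adj v w) (hw0 : muStarDir G K σ v w = 0)
    (hu : u ∈ zeroBranch G K σ v w) :
    u ∈ CvSet G K v ∧ u ≠ v ∧ muStarDir G K σ v u = 0 := by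
  rcases Relation.ReflTransGen.cases_head hu with rfl | ⟨_, h, _⟩
  · exact ⟨mem_CvSet_of_adj hw, hw.ne', hw0⟩
  · exact ⟨h.1, h.2.1, h.2.2.1⟩

lemma mem_zeroBranch_of_parentOf_mem (hy : y ∈ CvSet G K v) (hyv : y ≠ v)
    (hy0 : muStarDir G K σ v y = 0) (hp : parentOf G K v y ∈ zeroBranch G K σ v w) :
    y ∈ zeroBranch G K σ v w :=
  Relation.ReflTransGen.head ⟨hy, hyv, hy0, rfl⟩ hp

lemma parentOf_mem_zeroBranch (hu : u ∈ zeroBranch G K σ v w) (huw : u ≠ w) :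
    parentOf G K v u ∈ zeroBranch G K σ v w := by
  rcases Relation.ReflTransGen.cases_head hu with rfl | ⟨_, ⟨-, -, -, rfl⟩, hc⟩
  · exact absurd rfl huw
  · exact hc

variable (htree : (G.induce (CvSet G K v)).IsTree) (hfin : (CvSet G K v).Finite)
  (hσ : ∀ x, σ x = 1 ∨ σ x = -1) (hK : ∀ u ∈ K, ∀ t x, wpMsg G Set.univ σ t u x = σ u)
  {τ : V → ℤ} (hτ : ∀ x, τ x = 1 ∨ τ x = -1)
  (hτU : ∀ y ∈ CvSet G K v, y ≠ v → muStarDir G K σ v y ≠ 0 → τ y = muStarDir G K σ v y)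
  (hw : G.Adj v w) (hw0 : muStarDir G K σ v w = 0)

include htree hfin hσ hK hτ hτU hw hw0 in
/-- At a vertex `z` with `μ*_z = 0` the children's messages balance out, so repainting `z`
does not change how many children with nonzero message disagree with `z`. -/
lemma childCutCount_piecewise_le_of_mem {z : V} (hz : z ∈ zeroBranch G K σ v w) :
    childCutCount hfin ((zeroBranch G K σ v w).piecewise (fun _ => τ v) τ) z ≤
      childCutCount hfin τ z := by
  obtain ⟨hzS, hzv, hz0⟩ := zeroBranch_spec hw hw0 hz
  have hzK : z ∉ K := fun h => by
    rw [muStarDir_of_mem hK h] at hz0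
    rcases hσ z with h | h <;> omega
  have hC : ∀ y, y ∈ (G.neighborFinset z).erase (parentOf G K v z) ↔
      (y ∈ CvSet G K v ∧ y ≠ v) ∧ parentOf G K v y = z := fun y => by
    rw [← filter_parentOf_eq htree hfin hzS hzv hzK]
    simp [and_comm]
  set C := (G.neighborFinset z).erase (parentOf G K v z)
  have hfilter : ∀ τ' : V → ℤ, childCutCount hfin τ' z = #{y ∈ C | τ' y ≠ τ' z} := fun τ' => by
    unfold childCutCount
    congr 1
    ext y
    simp only [mem_filter, mem_erase, Set.Finite.mem_toFinset, hC]
    tauto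
  have hbound : ∀ y ∈ C, |muStarDir G K σ v y| ≤ 1 := fun y _ => abs_muStarDir_le_one hσ y
  have hsum : ∑ y ∈ C, muStarDir G K σ v y = 0 :=
    psiZ_eq_zero_iff.1 ((muStarDir_eq_psiZ_sum htree hfin hK hzS hzK).symm.trans hz0)
  have hneg : ∀ x, -τ x = 1 ∨ -τ x = -1 := fun x => by rcases hτ x with h | h <;> simp [h]
  rw [hfilter, hfilter, Set.piecewise_eq_of_mem _ _ _ hz]
  calc #{y ∈ C | (zeroBranch G K σ v w).piecewise (fun _ => τ v) τ y ≠ τ v}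
      = #{y ∈ C | muStarDir G K σ v y = -τ v} := by
        refine congrArg card (filter_congr fun y hy => ?_)
        obtain ⟨⟨hyS, hyv⟩, hpy⟩ := (hC y).1 hy
        by_cases hyZ : y ∈ zeroBranch G K σ v w
        · rw [Set.piecewise_eq_of_mem _ _ _ hyZ, (zeroBranch_spec hw hw0 hyZ).2.2]
          rcases hτ v with h | h <;> simp [h]
        · have hy0 : muStarDir G K σ v y ≠ 0 := fun h0 =>
            hyZ (mem_zeroBranch_of_parentOf_mem hyS hyv h0 (hpy ▸ hz))
          rw [Set.piecewise_eq_of_notMem _ _ _ hyZ, hτU y hyS hyv hy0]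
          have := abs_le.1 (hbound y hy)
          rcases hτ v with h | h <;> rw [h] <;> omega
    _ = #{y ∈ C | muStarDir G K σ v y = -τ z} :=
        card_filter_eq_of_sum_eq_zero hbound hsum (hneg v) (hneg z)
    _ ≤ #{y ∈ C | τ y ≠ τ z} := by
        refine card_le_card fun y hy => ?_
        rw [mem_filter] at hy ⊢
        obtain ⟨⟨hyS, hyv⟩, -⟩ := (hC y).1 hy.1
        have hy0 : muStarDir G K σ v y ≠ 0 := by rcases hτ z with h | h <;> omega
        refine ⟨hy.1, ?_⟩
        rw [hτU y hyS hyv hy0]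
        rcases hτ z with h | h <;> omega

include htree hw in
lemma childCutCount_piecewise_eq_of_notMem {z : V} (hz : z ∉ zeroBranch G K σ v w)
    (hzv : z ≠ v) :
    childCutCount hfin ((zeroBranch G K σ v w).piecewise (fun _ => τ v) τ) z =
      childCutCount hfin τ z := by
  have hyZ : ∀ y, parentOf G K v y = z → y ∉ zeroBranch G K σ v w := by
    rintro y rfl hyZ
    by_cases hyw : y = w
    · exact hzv (hyw ▸ parentOf_of_adj_root htree hw)
    · exact hz (parentOf_mem_zeroBranch hyZ hyw)
  unfold childCutCount
  refine congrArg card (filter_congr fun y _ => and_congr_right fun hpy => ?_)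
  rw [Set.piecewise_eq_of_notMem _ _ _ hz, Set.piecewise_eq_of_notMem _ _ _ (hyZ y hpy)]

include htree hw hw0 in
lemma childCutCount_piecewise_root_lt (hne : τ w ≠ τ v) :
    childCutCount hfin ((zeroBranch G K σ v w).piecewise (fun _ => τ v) τ) v <
      childCutCount hfin τ v := by
  have hvZ : v ∉ zeroBranch G K σ v w := fun h => (zeroBranch_spec hw hw0 h).2.1 rfl
  have hwF : w ∈ {y ∈ hfin.toFinset.erase v | parentOf G K v y = v ∧ τ y ≠ τ v} := by
    simp [mem_CvSet_of_adj hw, hw.ne', parentOf_of_adj_root htree hw, hne]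
  unfold childCutCount
  refine (card_le_card fun y hy => ?_).trans_lt (card_erase_lt_of_mem hwF)
  rw [Set.piecewise_eq_of_notMem _ _ _ hvZ, mem_filter] at hy
  have hyZ : y ∉ zeroBranch G K σ v w := fun h => hy.2.2 (Set.piecewise_eq_of_mem _ _ _ h)
  rw [Set.piecewise_eq_of_notMem _ _ _ hyZ] at hy
  exact mem_erase.2 ⟨fun h => hyZ (h ▸ mem_zeroBranch_self), mem_filter.2 hy⟩

include htree hfin hσ hK hτ hτU hw hw0 in
lemma cutCount_piecewise_lt (hne : τ w ≠ τ v) :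
    cutCount hfin ((zeroBranch G K σ v w).piecewise (fun _ => τ v) τ) < cutCount hfin τ := by
  rw [cutCount_eq_sum_childCutCount htree hfin, cutCount_eq_sum_childCutCount htree hfin]
  refine sum_lt_sum (fun z _ => ?_)
    ⟨v, by simp [mem_CvSet_self], childCutCount_piecewise_root_lt htree hfin hw hw0 hne⟩
  by_cases hz : z ∈ zeroBranch G K σ v w
  · exact childCutCount_piecewise_le_of_mem htree hfin hσ hK hτ hτU hw hw0 hz
  by_cases hzv : z = v
  · exact hzv ▸ (childCutCount_piecewise_root_lt htree hfin hw hw0 hne).le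
  · exact (childCutCount_piecewise_eq_of_notMem htree hfin hw hz hzv).le

end Exchange

lemma cutW_le_cutCount {V : Type*} {G : SimpleGraph V} {K : Set V} {v : V}
    (htree : (G.induce (CvSet G K v)).IsTree) (hfin : (CvSet G K v).Finite) {U : Set V}
    {b τ : V → ℤ} (hτ : ∀ x, τ x = 1 ∨ τ x = -1) (hb : ∀ x ∈ U, τ x = b x) :
    cutW (GvG G K v) U b ≤ cutCount hfin τ :=
  Nat.sInf_le ⟨τ, hτ, hb, (ncard_bichromatic_eq_two_mul_cutCount htree hfin τ).symm⟩

section Optimal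

variable {V : Type*} {G : SimpleGraph V} [∀ v, Fintype (G.neighborSet v)] {σ : V → ℤ}
  {K : Set V} {v : V}

/-- The domain `U_v ∪ {v}` of the boundary condition `σ_{↑v}`. -/
def sigmaUpDomain (G : SimpleGraph V) [∀ v, Fintype (G.neighborSet v)] (K : Set V)
    (σ : V → ℤ) (v : V) : Set V :=
  {w | w ∈ CvSet G K v ∧ w ≠ v ∧ muStarDir G K σ v w ≠ 0} ∪ {v}

noncomputable def sigmaUp (G : SimpleGraph V) [∀ v, Fintype (G.neighborSet v)] (K : Set V)
    (σ : V → ℤ) (v : V) : V → ℤ :=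
  fun x => if x = v then tpsiZ (muStarV G K σ v) else muStarDir G K σ v x

lemma eq_of_muStarDir_eq_zero_of_optimal (htree : (G.induce (CvSet G K v)).IsTree)
    (hfin : (CvSet G K v).Finite) (hσ : ∀ x, σ x = 1 ∨ σ x = -1)
    (hK : ∀ u ∈ K, ∀ t x, wpMsg G Set.univ σ t u x = σ u) {τ : V → ℤ}
    (hτ : ∀ x, τ x = 1 ∨ τ x = -1) (hτb : ∀ x ∈ sigmaUpDomain G K σ v, τ x = sigmaUp G K σ v x)
    (hτU : ∀ y ∈ CvSet G K v, y ≠ v → muStarDir G K σ v y ≠ 0 → τ y = muStarDir G K σ v y)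
    (hopt : 2 * cutW (GvG G K v) (sigmaUpDomain G K σ v) (sigmaUp G K σ v) =
      {p : V × V | (GvG G K v).Adj p.1 p.2 ∧ τ p.1 ≠ τ p.2}.ncard)
    {w : V} (hw : G.Adj v w) (hw0 : muStarDir G K σ v w = 0) : τ w = τ v := by
  by_contra hne
  have hτ' : ∀ x, (zeroBranch G K σ v w).piecewise (fun _ => τ v) τ x = 1 ∨
      (zeroBranch G K σ v w).piecewise (fun _ => τ v) τ x = -1 := fun x => by
    by_cases hx : x ∈ zeroBranch G K σ v w
    · rw [Set.piecewise_eq_of_mem _ _ _ hx]; exact hτ v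
    · rw [Set.piecewise_eq_of_notMem _ _ _ hx]; exact hτ x
  have hτ'b := fun x hx => (Set.piecewise_eq_of_notMem _ (fun _ => τ v) τ fun h => by
    obtain ⟨-, hxv, hx0⟩ := zeroBranch_spec hw hw0 h
    rcases hx with ⟨-, -, h0⟩ | rfl
    exacts [h0 hx0, hxv rfl]).trans (hτb x hx)
  have := cutW_le_cutCount htree hfin hτ' hτ'b
  have := cutCount_piecewise_lt htree hfin hσ hK hτ hτU hw hw0 hne
  rw [ncard_bichromatic_eq_two_mul_cutCount htree hfin] at hopt
  omega

end Optimal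

/-- Corollary 3.5: if `σ*_{↑v}` is an optimal extension of `σ_{↑v}` to a cut of `G_v`, then
`∑_{w∈∂v} (1 - σ*_{↑v}(v)σ*_{↑v}(w))/2 = ∑_{w∈∂v} 1{μ*_{w→v} = -ψ̃(μ*_v)}`. -/
theorem first_level_cut_count :
    ∃ c : ℝ, 0 < c ∧ ∃ D : ℝ, ∀ dp dm : ℝ,
    0 < dm → dm < dp → D ≤ dp → c * Real.sqrt (dp * Real.log dp) ≤ dp - dm →
    ∀ (V : Type*) (G : SimpleGraph V) [∀ v : V, Fintype (G.neighborSet v)] (σ : V → ℤ),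
    (∀ x : V, σ x = 1 ∨ σ x = -1) →
    ∀ K : Set V, K = coreSet G σ dp dm c →
    ∀ v : V, (CvSet G K v).Finite → (G.induce (CvSet G K v)).IsTree →
    ∀ τ : V → ℤ, (∀ x : V, τ x = 1 ∨ τ x = -1) →
      (∀ x ∈ ({w | w ∈ CvSet G K v ∧ w ≠ v ∧ muStarDir G K σ v w ≠ 0} ∪ {v} : Set V),
        τ x = if x = v then tpsiZ (muStarV G K σ v) else muStarDir G K σ v x) →
      2 * cutW (GvG G K v)
          ({w | w ∈ CvSet G K v ∧ w ≠ v ∧ muStarDir G K σ v w ≠ 0} ∪ {v})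
          (fun x => if x = v then tpsiZ (muStarV G K σ v) else muStarDir G K σ v x)
        = {p : V × V | (GvG G K v).Adj p.1 p.2 ∧ τ p.1 ≠ τ p.2}.ncard →
      (∑ w ∈ G.neighborFinset v, (1 - ((τ v * τ w : ℤ) : ℝ)) / 2)
        = ∑ w ∈ G.neighborFinset v,
            (if muStarDir G K σ v w = - tpsiZ (muStarV G K σ v) then (1 : ℝ) else 0) := by
  refine ⟨1, one_pos, 10 ^ 6,
    fun dp dm _ _ hD hgap V G _ σ hσ K hK v hfin htree τ hτ hτb hopt => ?_⟩
  rw [one_mul] at hgap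
  have hKmsg : ∀ u ∈ K, ∀ t x, wpMsg G Set.univ σ t u x = σ u := fun u hu t =>
    wpMsg_eq_of_forall_majority G hσ
      (fun _ hu => card_neighborFinset_add_three_le_of_mem_coreSet G hσ hD hgap hu) t u (hK ▸ hu)
  have hτv : τ v = tpsiZ (muStarV G K σ v) := by simpa using hτb v (.inr rfl)
  have hτU : ∀ y ∈ CvSet G K v, y ≠ v → muStarDir G K σ v y ≠ 0 → τ y = muStarDir G K σ v y :=
    fun y hy hyv hy0 => by simpa [hyv] using hτb y (.inl ⟨hy, hyv, hy0⟩)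
  refine Finset.sum_congr rfl fun w hw => ?_
  rw [SimpleGraph.mem_neighborFinset] at hw
  have hbd := abs_le.1 (abs_muStarDir_le_one (G := G) (K := K) (v := v) hσ w)
  have ht := tpsiZ_eq_one_or_neg_one (muStarV G K σ v)
  by_cases hw0 : muStarDir G K σ v w = 0
  · rw [eq_of_muStarDir_eq_zero_of_optimal htree hfin hσ hKmsg hτ hτb hτU hopt hw hw0,
      if_neg (by rcases ht with h | h <;> omega)]
    rcases hτ v with h | h <;> simp [h]
  · rw [hτv, hτU w (mem_CvSet_of_adj hw) hw.ne' hw0]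
    obtain hm | hm : muStarDir G K σ v w = 1 ∨ muStarDir G K σ v w = -1 := by omega
    all_goals rcases ht with h | h <;> rw [h, hm] <;> norm_num
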